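/- Let f : ℝ × [0,∞) → [0,∞) be Borel with 0 < \bar f := ∫_ℝ ∫_{max(a,0)}^∞ (2y − a) f(a,y) dy da < ∞, set f^⋆ := 1/\bar f, and define φ(y) := f^⋆ [∫_ℝ ∫_{max(y, max(a,0))}^∞ f(a,η) dη da + ∫_{−∞}^y f(a,y)(y − a) da] and Φ(y) := ∫_0^y φ(x) dx for y ≥ 0. Then ∫_0^∞ φ(y) dy = 1, and for every y ≥ 0 one has 1 − Φ(y) = f^⋆ ∫_ℝ ∫_0^∞ f(a,η) 1_{{η > max(y, max(a,0))}} (2η − a − y) dη da. -/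

import Mathlib

open MeasureTheory Filter Set
open scoped ENNReal NNReal

noncomputable section

/-- `f̄ = ∫_ℝ ∫_{max(a,0)}^∞ (2y - a) f(a,y) dy da`. -/
def barI (f : ℝ × ℝ → ℝ) : ℝ≥0∞ :=
  ∫⁻ a, ∫⁻ y in Ioi (max a 0), ENNReal.ofReal ((2 * y - a) * f (a, y))

/-- `φ(y) = f⋆ [∫_ℝ ∫_{max(y, max(a,0))}^∞ f(a,η) dη da + ∫_{-∞}^y f(a,y)(y-a) da]`
where `f⋆ = 1/f̄`. -/
def phiI (f : ℝ × ℝ → ℝ) (y : ℝ) : ℝ :=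
  ((barI f)⁻¹ *
    ((∫⁻ a, ∫⁻ η in Ioi (max y (max a 0)), ENNReal.ofReal (f (a, η)))
      + ∫⁻ a in Iio y, ENNReal.ofReal (f (a, y) * (y - a)))).toReal

/-- `Φ(y) = ∫_0^y φ(x) dx`. -/
def PhiI (f : ℝ × ℝ → ℝ) (y : ℝ) : ℝ := ∫ x in (0 : ℝ)..y, phiI f x

/-! For `η > max a 0` and `y ≥ 0` split the weight of `f̄` as
`2η - a = min η y + (η - a) 1{η ≤ y} + (2η - a - y) 1{η > y}`.
By Tonelli, integrating the first part of the bracket in `φ` over `x ∈ (0, y]` produces the weight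
`min η y = |(0, y] ∩ (0, η)|`, and the second part produces `(η - a) 1{η ≤ y}`; hence
`f̄ Φ(y) + (tail integral) = f̄`. Over `x ∈ (0, ∞)` the weights are `η` and `η - a`, which add up
to `2η - a`, so `∫₀^∞ φ = 1`. -/

theorem measurable_setLIntegral_of_measurableSet {α β : Type*} [MeasurableSpace α]
    [MeasurableSpace β] {ν : Measure β} [SFinite ν] {s : α → Set β}
    (hs : MeasurableSet {q : α × β | q.2 ∈ s q.1}) {g : α × β → ℝ≥0∞} (hg : Measurable g) :
    Measurable fun p => ∫⁻ y in s p, g (p, y) ∂ν := by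
  have h : (fun p => ∫⁻ y in s p, g (p, y) ∂ν)
      = fun p => ∫⁻ y, {q : α × β | q.2 ∈ s q.1}.indicator g (p, y) ∂ν :=
    funext fun p => (lintegral_indicator (measurable_prodMk_left hs) _).symm
  rw [h]
  exact (hg.indicator hs).lintegral_prod_right'

theorem setLIntegral_setLIntegral_Ioi_max {g : ℝ → ℝ≥0∞} (hg : Measurable g) (S : Set ℝ)
    (c : ℝ) :
    ∫⁻ x in S, ∫⁻ η in Ioi (max x c), g η = ∫⁻ η in Ioi c, volume (S ∩ Iio η) * g η := by
  have hm : Measurable (Function.uncurry fun x η => (Ioi x).indicator g η) :=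
    (hg.comp measurable_snd).indicator (measurableSet_lt measurable_fst measurable_snd)
  calc ∫⁻ x in S, ∫⁻ η in Ioi (max x c), g η
      = ∫⁻ x in S, ∫⁻ η in Ioi c, (Ioi x).indicator g η := by
        refine lintegral_congr fun x => ?_
        rw [setLIntegral_indicator measurableSet_Ioi, Ioi_inter_Ioi]
    _ = ∫⁻ η in Ioi c, ∫⁻ x in S, (Iio η).indicator (fun _ => g η) x :=
        lintegral_lintegral_swap hm.aemeasurable
    _ = ∫⁻ η in Ioi c, volume (S ∩ Iio η) * g η := by
        refine lintegral_congr fun η => ?_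
        rw [lintegral_indicator_const measurableSet_Iio, Measure.restrict_apply measurableSet_Iio,
          inter_comm, mul_comm]

theorem setLIntegral_setLIntegral_Iio_swap {k : ℝ × ℝ → ℝ≥0∞} (hk : Measurable k) (S : Set ℝ) :
    ∫⁻ x in S, ∫⁻ a in Iio x, k (a, x) = ∫⁻ a, ∫⁻ x in S ∩ Ioi a, k (a, x) := by
  have hm : Measurable (Function.uncurry fun x a => (Iio x).indicator (fun a => k (a, x)) a) :=
    (hk.comp measurable_swap).indicator (measurableSet_lt measurable_snd measurable_fst)
  have hinner : ∀ a, ∫⁻ x in S ∩ Ioi a, k (a, x)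
      = ∫⁻ x in S, (Iio x).indicator (fun a => k (a, x)) a := fun a => by
    rw [inter_comm, ← setLIntegral_indicator measurableSet_Ioi]
    rfl
  simp_rw [hinner, ← lintegral_indicator measurableSet_Iio]
  exact lintegral_lintegral_swap hm.aemeasurable

theorem integral_toReal_const_mul {α : Type*} [MeasurableSpace α] {μ : Measure α}
    {H : α → ℝ≥0∞} (hH : Measurable H) (hfin : ∫⁻ x, H x ∂μ ≠ ⊤) (c : ℝ≥0∞) :
    ∫ x, (c * H x).toReal ∂μ = (c * ∫⁻ x, H x ∂μ).toReal := by
  simp only [ENNReal.toReal_mul, integral_const_mul,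
    integral_toReal hH.aemeasurable (ae_lt_top hH hfin)]

theorem ENNReal.one_sub_toReal_inv_mul_of_add_eq {a b c : ℝ≥0∞} (h : a + b = c) (hc0 : c ≠ 0)
    (hc : c ≠ ⊤) : 1 - (c⁻¹ * a).toReal = (c⁻¹ * b).toReal := by
  have ha : a ≠ ⊤ := ne_top_of_le_ne_top hc (h ▸ le_self_add)
  have hb : b ≠ ⊤ := ne_top_of_le_ne_top hc (h ▸ le_add_self)
  have hsum : c.toReal = a.toReal + b.toReal := by rw [← h, ENNReal.toReal_add ha hb]
  have hc' : c.toReal ≠ 0 := ENNReal.toReal_ne_zero.2 ⟨hc0, hc⟩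
  rw [ENNReal.toReal_mul, ENNReal.toReal_mul, ENNReal.toReal_inv]
  field_simp
  linarith

theorem ofReal_mul_add_ofReal_mul {u v : ℝ} (hu : 0 ≤ u) (hv : 0 ≤ v) (t : ℝ) :
    ENNReal.ofReal u * ENNReal.ofReal t + ENNReal.ofReal (t * v)
      = ENNReal.ofReal ((u + v) * t) := by
  rw [ENNReal.ofReal_mul' hv, mul_comm (ENNReal.ofReal u), ← mul_add, ← ENNReal.ofReal_add hu hv,
    ← ENNReal.ofReal_mul' (add_nonneg hu hv), mul_comm]

-- The bracket in `phiI`: `phiI f x = ((barI f)⁻¹ * phiBracket f x).toReal` holds by `rfl`.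
def phiBracket (f : ℝ × ℝ → ℝ) (x : ℝ) : ℝ≥0∞ :=
  (∫⁻ a, ∫⁻ η in Ioi (max x (max a 0)), ENNReal.ofReal (f (a, η)))
    + ∫⁻ a in Iio x, ENNReal.ofReal (f (a, x) * (x - a))

def phiTail (f : ℝ × ℝ → ℝ) (y : ℝ) : ℝ≥0∞ :=
  ∫⁻ a, ∫⁻ η in Ioi (0 : ℝ),
    (if max y (max a 0) < η then ENNReal.ofReal (f (a, η) * (2 * η - a - y)) else 0)

section

variable {f : ℝ × ℝ → ℝ} {y : ℝ}

theorem measurable_setLIntegral_Ioi_max (hfm : Measurable f) :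
    Measurable (Function.uncurry fun x a =>
      ∫⁻ η in Ioi (max x (max a 0)), ENNReal.ofReal (f (a, η))) :=
  measurable_setLIntegral_of_measurableSet (s := fun p : ℝ × ℝ => Ioi (max p.1 (max p.2 0)))
    (g := fun q => ENNReal.ofReal (f (q.1.2, q.2)))
    (measurableSet_lt (measurable_fst.fst.max (measurable_fst.snd.max measurable_const))
      measurable_snd) (by fun_prop)

theorem measurable_phiBracket (hfm : Measurable f) : Measurable (phiBracket f) :=
  (measurable_setLIntegral_Ioi_max hfm).lintegral_prod_right'.add <|
    measurable_setLIntegral_of_measurableSet (s := Iio)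
      (g := fun q => ENNReal.ofReal (f (q.2, q.1) * (q.1 - q.2)))
      (measurableSet_lt measurable_snd measurable_fst) (by fun_prop)

theorem setLIntegral_phiBracket (hfm : Measurable f) {S : Set ℝ} (hS : MeasurableSet S)
    (hS0 : S ⊆ Ioi 0) :
    ∫⁻ x in S, phiBracket f x
      = ∫⁻ a, ∫⁻ η in Ioi (max a 0), (volume (S ∩ Iio η) * ENNReal.ofReal (f (a, η))
          + S.indicator (fun η => ENNReal.ofReal (f (a, η) * (η - a))) η) := by
  have hfirst : ∫⁻ x in S, ∫⁻ a, ∫⁻ η in Ioi (max x (max a 0)), ENNReal.ofReal (f (a, η))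
      = ∫⁻ a, ∫⁻ η in Ioi (max a 0), volume (S ∩ Iio η) * ENNReal.ofReal (f (a, η)) :=
    (lintegral_lintegral_swap (measurable_setLIntegral_Ioi_max hfm).aemeasurable).trans <|
      lintegral_congr fun a => setLIntegral_setLIntegral_Ioi_max (by fun_prop) S _
  have hsecond : ∫⁻ x in S, ∫⁻ a in Iio x, ENNReal.ofReal (f (a, x) * (x - a))
      = ∫⁻ a, ∫⁻ η in Ioi (max a 0),
          S.indicator (fun η => ENNReal.ofReal (f (a, η) * (η - a))) η := by
    refine (setLIntegral_setLIntegral_Iio_swap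
      (k := fun q => ENNReal.ofReal (f q * (q.2 - q.1))) (by fun_prop) S).trans <|
        lintegral_congr fun a => ?_
    rw [setLIntegral_indicator hS, ← Ioi_inter_Ioi, ← inter_assoc, inter_right_comm,
      inter_eq_left.2 hS0]
  have hm : Measurable fun a =>
      ∫⁻ η in Ioi (max a 0), S.indicator (fun η => ENNReal.ofReal (f (a, η) * (η - a))) η :=
    measurable_setLIntegral_of_measurableSet (s := fun a => Ioi (max a 0))
      (g := fun q => S.indicator (fun η => ENNReal.ofReal (f (q.1, η) * (η - q.1))) q.2)
      (measurableSet_lt (measurable_fst.max measurable_const) measurable_snd)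
      ((by fun_prop : Measurable fun q : ℝ × ℝ => ENNReal.ofReal (f q * (q.2 - q.1))).indicator
        (measurable_snd hS))
  have hind : ∀ a, Measurable fun η =>
      S.indicator (fun η => ENNReal.ofReal (f (a, η) * (η - a))) η :=
    fun a => Measurable.indicator (by fun_prop) hS
  have hA : Measurable fun x => ∫⁻ a, ∫⁻ η in Ioi (max x (max a 0)), ENNReal.ofReal (f (a, η)) :=
    (measurable_setLIntegral_Ioi_max hfm).lintegral_prod_right'
  simp only [phiBracket]
  rw [lintegral_add_left hA, hfirst, hsecond, ← lintegral_add_right _ hm]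
  exact lintegral_congr fun a => (lintegral_add_right _ (hind a)).symm

theorem setLIntegral_phiBracket_Ioi (hfm : Measurable f) :
    ∫⁻ x in Ioi 0, phiBracket f x = barI f := by
  rw [setLIntegral_phiBracket hfm measurableSet_Ioi subset_rfl, barI]
  refine lintegral_congr fun a => setLIntegral_congr_fun measurableSet_Ioi fun η hη => ?_
  have hη0 : 0 < η := (le_max_right a 0).trans_lt hη
  have hηa : a < η := (le_max_left a 0).trans_lt hη
  rw [Ioi_inter_Iio, Real.volume_Ioo, indicator_of_mem (mem_Ioi.2 hη0),
    ofReal_mul_add_ofReal_mul (by linarith) (by linarith)]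
  congr 1
  ring

theorem phiTail_eq (hy : 0 ≤ y) :
    phiTail f y = ∫⁻ a, ∫⁻ η in Ioi (max a 0),
      (Ioi y).indicator (fun η => ENNReal.ofReal (f (a, η) * (2 * η - a - y))) η := by
  refine lintegral_congr fun a => ?_
  rw [setLIntegral_indicator measurableSet_Ioi, Ioi_inter_Ioi,
    ← inter_eq_left.2 (Ioi_subset_Ioi (le_max_of_le_left hy) : Ioi (max y (max a 0)) ⊆ Ioi 0),
    ← setLIntegral_indicator measurableSet_Ioi]
  congr 1 with η

theorem setLIntegral_phiBracket_Ioc_add_phiTail (hfm : Measurable f) (hy : 0 ≤ y) :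
    (∫⁻ x in Ioc 0 y, phiBracket f x) + phiTail f y = barI f := by
  have hind : ∀ a, Measurable fun η =>
      (Ioi y).indicator (fun η => ENNReal.ofReal (f (a, η) * (2 * η - a - y))) η :=
    fun a => Measurable.indicator (by fun_prop) measurableSet_Ioi
  have htail : Measurable fun a => ∫⁻ η in Ioi (max a 0),
      (Ioi y).indicator (fun η => ENNReal.ofReal (f (a, η) * (2 * η - a - y))) η :=
    measurable_setLIntegral_of_measurableSet (s := fun a => Ioi (max a 0))
      (g := fun q =>
        (Ioi y).indicator (fun η => ENNReal.ofReal (f (q.1, η) * (2 * η - q.1 - y))) q.2)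
      (measurableSet_lt (measurable_fst.max measurable_const) measurable_snd)
      ((by fun_prop : Measurable fun q : ℝ × ℝ =>
        ENNReal.ofReal (f q * (2 * q.2 - q.1 - y))).indicator (measurable_snd measurableSet_Ioi))
  rw [setLIntegral_phiBracket hfm measurableSet_Ioc Ioc_subset_Ioi_self, phiTail_eq hy,
    ← lintegral_add_right _ htail, barI]
  refine lintegral_congr fun a => ?_
  rw [← lintegral_add_right _ (hind a)]
  refine setLIntegral_congr_fun measurableSet_Ioi fun η hη => ?_
  have hη0 : 0 < η := (le_max_right a 0).trans_lt hη
  have hηa : a < η := (le_max_left a 0).trans_lt hη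
  have hvol : volume (Ioc 0 y ∩ Iio η) = ENNReal.ofReal (min y η) := by
    rw [measure_congr ((ae_eq_refl _).inter Iio_ae_eq_Iic), Ioc_inter_Iic, Real.volume_Ioc,
      sub_zero]
  rw [hvol]
  rcases le_or_gt η y with hηy | hyη
  · rw [min_eq_right hηy, indicator_of_mem (show η ∈ Ioc 0 y from ⟨hη0, hηy⟩),
      indicator_of_notMem (show η ∉ Ioi y from hηy.not_gt), add_zero,
      ofReal_mul_add_ofReal_mul (by linarith) (by linarith)]
    congr 1
    ring
  · rw [min_eq_left hyη.le, indicator_of_notMem (fun h => hyη.not_ge h.2),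
      indicator_of_mem (mem_Ioi.2 hyη), add_zero, ofReal_mul_add_ofReal_mul hy (by linarith)]
    congr 1
    ring

end

theorem stmt_9_general (f : ℝ × ℝ → ℝ) (hfm : Measurable f)
    (hbar0 : 0 < barI f) (hbar : barI f < ⊤) :
    (∫ y in Ioi (0 : ℝ), phiI f y = 1) ∧
    ∀ y : ℝ, 0 ≤ y →
      1 - PhiI f y
        = ((barI f)⁻¹ *
            ∫⁻ a, ∫⁻ η in Ioi (0 : ℝ),
              (if max y (max a 0) < η then ENNReal.ofReal (f (a, η) * (2 * η - a - y))
               else 0)).toReal := by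
  have hφ : phiI f = fun x => ((barI f)⁻¹ * phiBracket f x).toReal := rfl
  have hmeas := measurable_phiBracket hfm
  constructor
  · have htotal := setLIntegral_phiBracket_Ioi hfm
    rw [hφ, integral_toReal_const_mul hmeas (htotal ▸ hbar.ne), htotal,
      ENNReal.inv_mul_cancel hbar0.ne' hbar.ne, ENNReal.toReal_one]
  · intro y hy
    have hsplit := setLIntegral_phiBracket_Ioc_add_phiTail hfm hy
    have hfin : ∫⁻ x in Ioc 0 y, phiBracket f x ≠ ⊤ :=
      ne_top_of_le_ne_top hbar.ne (hsplit ▸ le_self_add)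
    rw [PhiI, intervalIntegral.integral_of_le hy, hφ, integral_toReal_const_mul hmeas hfin]
    exact ENNReal.one_sub_toReal_inv_mul_of_add_eq hsplit hbar0.ne' hbar.ne

/-- `φ` is a probability density: `∫_0^∞ φ(y) dy = 1`, and
`1 - Φ(y) = f⋆ ∫_ℝ ∫_0^∞ f(a,η) 1_{η > max(y, max(a,0))} (2η - a - y) dη da` for `y ≥ 0`. -/
theorem stmt_9 (f : ℝ × ℝ → ℝ) (hfm : Measurable f) (hf0 : ∀ p, 0 ≤ f p)
    (hbar0 : 0 < barI f) (hbar : barI f < ⊤) :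
    (∫ y in Ioi (0 : ℝ), phiI f y = 1) ∧
    ∀ y : ℝ, 0 ≤ y →
      1 - PhiI f y
        = ((barI f)⁻¹ *
            ∫⁻ a, ∫⁻ η in Ioi (0 : ℝ),
              (if max y (max a 0) < η then ENNReal.ofReal (f (a, η) * (2 * η - a - y))
               else 0)).toReal :=
  stmt_9_general f hfm hbar0 hbar
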